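/- arXiv:2002.08071 — 4 statements merged into one kernel-verified Lean document; each statement's English description precedes it below -/
import Mathlib

section
/- Generalized adjoint method (constant parameters, integral loss): Let S > 0 and let f : [0,S] × ℝ^{n_z} × ℝ^{n_θ} → ℝ^{n_z} be continuously differentiable. Fix θ ∈ ℝ^{n_θ} and suppose z : [0,S] × ℝ^{n_θ} → ℝ^{n_z} is continuously differentiable, satisfies ∂z/∂s(s,θ) = f(s, z(s,θ), θ) for all s, and the initial condition z(0,θ) = z₀ is independent of θ; write v(s) = ∂z/∂θ(s,θ) ∈ ℝ^{n_z×n_θ} and assume v satisfies the variational equation v'(s) = (∂f/∂z)(s, z(s,θ), θ) v(s) + (∂f/∂θ)(s, z(s,θ), θ) with v(0) = 0. Let L : ℝ^{n_z} → ℝ and l : [0,S] × ℝ^{n_z} → ℝ be continuously differentiable and define the loss ℓ(θ) = L(z(S,θ)) + ∫₀ᔆ l(τ, z(τ,θ)) dτ. If a : [0,S] → ℝ^{n_z} is differentiable and satisfies the adjoint final-value problem a'(s)ᵀ = −a(s)ᵀ (∂f/∂z)(s, z(s,θ), θ) − (∂l/∂z)(s, z(s,θ)) with a(S)ᵀ =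 (∂L/∂z)(z(S,θ)), then the gradient of the loss is dℓ/dθ = ∫₀ᔆ a(τ)ᵀ (∂f/∂θ)(τ, z(τ,θ), θ) dτ. -/
/-!
Along the trajectory, `s ↦ a(s)ᵀ v(s)` has derivative `a(s)ᵀ (∂f/∂θ)(s) - (∂l/∂z)(s) v(s)`, the
`∂f/∂z` terms of the variational and the adjoint equation cancelling. Integrating over `[0, S]`
with `v(0) = 0` and `a(S)ᵀ = ∂L/∂z` gives
`∫₀ˢ aᵀ ∂f/∂θ = ∂L/∂z · v(S) + ∫₀ˢ ∂l/∂z · v`,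
and the right-hand side is the chain rule for the terminal loss plus differentiation under the
integral sign for the running loss.
-/

open MeasureTheory Matrix

/-- The continuous linear map `w ↦ M *ᵥ w` given by a Jacobian matrix `M`. -/
noncomputable def mvCLM {m n : ℕ} (M : Matrix (Fin m) (Fin n) ℝ) :
    (Fin n → ℝ) →L[ℝ] (Fin m → ℝ) :=
  LinearMap.toContinuousLinearMap M.mulVecLin

/-- The continuous linear functional `w ↦ g ⬝ᵥ w` given by a gradient (row) vector `g`. -/
noncomputable def dotCLM {n : ℕ} (g : Fin n → ℝ) : (Fin n → ℝ) →L[ℝ] ℝ :=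
  LinearMap.toContinuousLinearMap
    { toFun := fun w => g ⬝ᵥ w
      map_add' := by intro x y; simp [dotProduct_add]
      map_smul' := by intro c x; simp [dotProduct_smul] }

attribute [local instance] Matrix.normedAddCommGroup Matrix.normedSpace

section PartialDerivative

variable {E F G : Type*} [NormedAddCommGroup E] [NormedSpace ℝ E] [NormedAddCommGroup F]
  [NormedSpace ℝ F] [NormedAddCommGroup G] [NormedSpace ℝ G]

theorem ContDiff.hasFDerivAt_comp_prodMk_right {g : E × F → G} (hg : ContDiff ℝ 1 g)
    (x : E) (y : F) :
    HasFDerivAt (fun w => g (x, w)) ((fderiv ℝ g (x, y)).comp (.inr ℝ E F)) y :=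
  (hg.differentiable one_ne_zero _).hasFDerivAt.comp y (hasFDerivAt_prodMk_right x y)

theorem ContDiff.continuous_fderiv_comp_inr {g : E × F → G} (hg : ContDiff ℝ 1 g) :
    Continuous fun p : E × F => (fderiv ℝ g p).comp (.inr ℝ E F) :=
  ((ContinuousLinearMap.compL ℝ F (E × F) G).flip (.inr ℝ E F)).continuous.comp
    (hg.continuous_fderiv one_ne_zero)

theorem ContDiff.continuousOn_of_hasFDerivAt_comp_prodMk_right {T : Type*} [TopologicalSpace T]
    {g : E × F → G} (hg : ContDiff ℝ 1 g) {x : T → E} {y : T → F} (hx : Continuous x)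
    (hy : Continuous y) {D : T → F →L[ℝ] G} {t : Set T}
    (hD : ∀ s ∈ t, HasFDerivAt (fun w => g (x s, w)) (D s) (y s)) : ContinuousOn D t :=
  (hg.continuous_fderiv_comp_inr.comp (hx.prodMk hy)).continuousOn.congr fun s hs =>
    (hD s hs).unique (hg.hasFDerivAt_comp_prodMk_right _ _)

theorem hasFDerivAt_intervalIntegral_of_contDiff [ProperSpace F] [CompleteSpace G]
    {Φ : ℝ × F → G} (hΦ : ContDiff ℝ 1 Φ) {a b : ℝ} {x₀ : F} {D : ℝ → F →L[ℝ] G}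
    (hD : ∀ t ∈ Set.uIcc a b, HasFDerivAt (fun x => Φ (t, x)) (D t) x₀) :
    HasFDerivAt (fun x => ∫ t in a..b, Φ (t, x)) (∫ t in a..b, D t) x₀ := by
  set Φ' : F → ℝ → F →L[ℝ] G := fun x t => (fderiv ℝ Φ (t, x)).comp (.inr ℝ ℝ F)
  have hΦ'_cont : Continuous fun p : ℝ × F => Φ' p.2 p.1 := hΦ.continuous_fderiv_comp_inr
  have hslice (x : F) : Continuous fun t => Φ (t, x) :=
    hΦ.continuous.comp (continuous_id.prodMk continuous_const)
  obtain ⟨C, hC⟩ := (isCompact_uIcc.prod (isCompact_closedBall x₀ 1)).exists_bound_of_continuousOn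
    hΦ'_cont.continuousOn
  have hbound : ∀ᵐ t ∂volume.restrict (Set.uIoc a b), ∀ x ∈ Metric.ball x₀ 1, ‖Φ' x t‖ ≤ C := by
    filter_upwards [ae_restrict_mem measurableSet_uIoc] with t ht x hx
    exact hC (t, x) ⟨Set.uIoc_subset_uIcc ht, Metric.ball_subset_closedBall hx⟩
  have hderiv := hasFDerivAt_integral_of_dominated_of_fderiv_le'' (F := fun x t => Φ (t, x))
    (Metric.ball_mem_nhds x₀ one_pos) (.of_forall fun x => (hslice x).aestronglyMeasurable)
    ((hslice x₀).intervalIntegrable a b)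
    (hΦ'_cont.comp (continuous_id.prodMk continuous_const)).aestronglyMeasurable hbound
    intervalIntegrable_const
    (.of_forall fun t x _ => hΦ.hasFDerivAt_comp_prodMk_right t x)
  refine hderiv.congr_fderiv (intervalIntegral.integral_congr fun t ht => ?_)
  exact (hΦ.hasFDerivAt_comp_prodMk_right t x₀).unique (hD t ht)

end PartialDerivative

section MatrixCLM

variable {m n : ℕ}

@[simp] theorem dotCLM_apply (g w : Fin n → ℝ) : dotCLM g w = g ⬝ᵥ w := rfl

@[simp] theorem mvCLM_apply (M : Matrix (Fin m) (Fin n) ℝ) (w : Fin n → ℝ) :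
    mvCLM M w = M *ᵥ w := rfl

theorem dotCLM_comp_mvCLM (g : Fin m → ℝ) (M : Matrix (Fin m) (Fin n) ℝ) :
    (dotCLM g).comp (mvCLM M) = dotCLM (g ᵥ* M) := by
  ext w
  simp [dotProduct_mulVec]

theorem HasFDerivAt.comp_mvCLM {φ : (Fin m → ℝ) → ℝ} {x : (Fin n → ℝ) → Fin m → ℝ}
    {g : Fin m → ℝ} {M : Matrix (Fin m) (Fin n) ℝ} {y : Fin n → ℝ}
    (hφ : HasFDerivAt φ (dotCLM g) (x y)) (hx : HasFDerivAt x (mvCLM M) y) :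
    HasFDerivAt (fun p => φ (x p)) (dotCLM (g ᵥ* M)) y :=
  dotCLM_comp_mvCLM g M ▸ hφ.comp y hx

theorem dotCLM_add (g h : Fin n → ℝ) : dotCLM (g + h) = dotCLM g + dotCLM h := by
  ext w
  simp [add_dotProduct]

theorem intervalIntegral_dotCLM {g : ℝ → Fin n → ℝ} {a b : ℝ}
    (hg : IntervalIntegrable g volume a b) :
    ∫ τ in a..b, dotCLM (g τ) = dotCLM (∫ τ in a..b, g τ) :=
  ((dotProductBilin ℝ ℝ : (Fin n → ℝ) →ₗ[ℝ] (Fin n → ℝ) →ₗ[ℝ] ℝ).toContinuousBilinearMap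
    |>.intervalIntegral_comp_comm hg :)

theorem continuousOn_of_continuousOn_dotCLM {T : Type*} [TopologicalSpace T] {g : T → Fin n → ℝ}
    {t : Set T} (hg : ContinuousOn (fun s => dotCLM (g s)) t) : ContinuousOn g t :=
  continuousOn_pi.2 fun j => by
    simpa [dotProduct_single] using hg.clm_apply (continuousOn_const (c := Pi.single j 1))

theorem continuousOn_of_continuousOn_mvCLM {T : Type*} [TopologicalSpace T]
    {M : T → Matrix (Fin m) (Fin n) ℝ} {t : Set T} (hM : ContinuousOn (fun s => mvCLM (M s)) t) :
    ContinuousOn M t :=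
  continuousOn_pi.2 fun i => continuousOn_pi.2 fun j =>
    ((continuous_apply i).comp_continuousOn
      (hM.clm_apply (continuousOn_const (c := Pi.single j 1)))).congr fun s _ => by simp

end MatrixCLM

section Adjoint

variable {m n : ℕ}

theorem HasDerivAt.vecMul {a : ℝ → Fin m → ℝ} {v : ℝ → Matrix (Fin m) (Fin n) ℝ}
    {a' : Fin m → ℝ} {v' : Matrix (Fin m) (Fin n) ℝ} {s : ℝ} (ha : HasDerivAt a a' s)
    (hv : HasDerivAt v v' s) : HasDerivAt (fun u => a u ᵥ* v u) (a s ᵥ* v' + a' ᵥ* v s) s :=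
  ((vecMulBilin ℝ ℝ : (Fin m → ℝ) →ₗ[ℝ] Matrix (Fin m) (Fin n) ℝ →ₗ[ℝ] Fin n → ℝ)
    |>.toContinuousBilinearMap.hasDerivAt_of_bilinear (fun _ => ha) (fun _ => hv) :)

theorem ContinuousOn.vecMul {T : Type*} [TopologicalSpace T] {a : T → Fin m → ℝ}
    {M : T → Matrix (Fin m) (Fin n) ℝ} {t : Set T} (ha : ContinuousOn a t) (hM : ContinuousOn M t) :
    ContinuousOn (fun s => a s ᵥ* M s) t :=
  continuousOn_iff_continuous_domRestrict.2 <|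
    (continuousOn_iff_continuous_domRestrict.1 ha).matrix_vecMul
      (continuousOn_iff_continuous_domRestrict.1 hM)

theorem hasDerivAt_vecMul_of_adjoint {A : Matrix (Fin m) (Fin m) ℝ} {B : Matrix (Fin m) (Fin n) ℝ}
    {g : Fin m → ℝ} {a : ℝ → Fin m → ℝ} {v : ℝ → Matrix (Fin m) (Fin n) ℝ} {s : ℝ}
    (hv : HasDerivAt v (A * v s + B) s) (ha : HasDerivAt a (-(a s ᵥ* A) - g) s) :
    HasDerivAt (fun u => a u ᵥ* v u) (a s ᵥ* B - g ᵥ* v s) s :=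
  (ha.vecMul hv).congr_deriv <| by
    simp only [vecMul_add, sub_vecMul, neg_vecMul, vecMul_vecMul]
    abel

theorem integral_vecMul_eq_of_adjoint {s₀ s₁ : ℝ} {A : ℝ → Matrix (Fin m) (Fin m) ℝ}
    {B : ℝ → Matrix (Fin m) (Fin n) ℝ} {g : ℝ → Fin m → ℝ} {a : ℝ → Fin m → ℝ}
    {v : ℝ → Matrix (Fin m) (Fin n) ℝ} (hB : ContinuousOn B (Set.uIcc s₀ s₁))
    (hg : ContinuousOn g (Set.uIcc s₀ s₁))
    (hv : ∀ s ∈ Set.uIcc s₀ s₁, HasDerivAt v (A s * v s + B s) s) (hv₀ : v s₀ = 0)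
    (ha : ∀ s ∈ Set.uIcc s₀ s₁, HasDerivAt a (-(a s ᵥ* A s) - g s) s) :
    ∫ τ in s₀..s₁, a τ ᵥ* B τ = a s₁ ᵥ* v s₁ + ∫ τ in s₀..s₁, g τ ᵥ* v τ := by
  have hv_cont : ContinuousOn v (Set.uIcc s₀ s₁) := fun s hs =>
    (hv s hs).continuousAt.continuousWithinAt
  have ha_cont : ContinuousOn a (Set.uIcc s₀ s₁) := fun s hs =>
    (ha s hs).continuousAt.continuousWithinAt
  have haB : IntervalIntegrable (fun τ => a τ ᵥ* B τ) volume s₀ s₁ :=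
    (ha_cont.vecMul hB).intervalIntegrable
  have hgv : IntervalIntegrable (fun τ => g τ ᵥ* v τ) volume s₀ s₁ :=
    (hg.vecMul hv_cont).intervalIntegrable
  have hftc := intervalIntegral.integral_eq_sub_of_hasDerivAt
    (fun s hs => hasDerivAt_vecMul_of_adjoint (hv s hs) (ha s hs)) (haB.sub hgv)
  rw [intervalIntegral.integral_sub haB hgv, hv₀, vecMul_zero, sub_zero] at hftc
  exact sub_eq_iff_eq_add.1 hftc

end Adjoint

theorem generalized_adjoint_method_general
    {nz nθ : ℕ} {S : ℝ} (hS : 0 < S)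
    (f : ℝ → (Fin nz → ℝ) → (Fin nθ → ℝ) → (Fin nz → ℝ))
    (hf : ContDiff ℝ 1 (fun p : ℝ × (Fin nz → ℝ) × (Fin nθ → ℝ) => f p.1 p.2.1 p.2.2))
    (θ : Fin nθ → ℝ) (z : ℝ → (Fin nθ → ℝ) → (Fin nz → ℝ))
    (hz : ContDiff ℝ 1 (fun p : ℝ × (Fin nθ → ℝ) => z p.1 p.2))
    -- Jacobians of `f` with respect to the state and the parameters, along the solution
    (Fz : ℝ → Matrix (Fin nz) (Fin nz) ℝ) (Fθ : ℝ → Matrix (Fin nz) (Fin nθ) ℝ)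
    (hFθ : ∀ s ∈ Set.Icc (0:ℝ) S, HasFDerivAt (fun p => f s (z s θ) p) (mvCLM (Fθ s)) θ)
    -- `v(s) = ∂z/∂θ(s,θ)` satisfies the variational equation with `v 0 = 0`
    (v : ℝ → Matrix (Fin nz) (Fin nθ) ℝ)
    (hv : ∀ s ∈ Set.Icc (0:ℝ) S, HasFDerivAt (fun p => z s p) (mvCLM (v s)) θ)
    (hvar : ∀ s ∈ Set.Icc (0:ℝ) S, HasDerivAt v (Fz s * v s + Fθ s) s)
    (hv0 : v 0 = 0)
    -- loss functions and their gradients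
    (L : (Fin nz → ℝ) → ℝ) (l : ℝ → (Fin nz → ℝ) → ℝ)
    (hl : ContDiff ℝ 1 (fun p : ℝ × (Fin nz → ℝ) => l p.1 p.2))
    (Lz : Fin nz → ℝ) (lz : ℝ → (Fin nz → ℝ))
    (hLz : HasFDerivAt L (dotCLM Lz) (z S θ))
    (hlz : ∀ s ∈ Set.Icc (0:ℝ) S, HasFDerivAt (fun w => l s w) (dotCLM (lz s)) (z s θ))
    -- the adjoint state
    (a : ℝ → (Fin nz → ℝ))
    (ha : ∀ s ∈ Set.Icc (0:ℝ) S, HasDerivAt a (-(a s ᵥ* Fz s) - lz s) s)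
    (haS : a S = Lz) :
    HasFDerivAt (fun θ' : Fin nθ → ℝ => L (z S θ') + ∫ τ in (0:ℝ)..S, l τ (z τ θ'))
      (dotCLM (∫ τ in (0:ℝ)..S, a τ ᵥ* Fθ τ)) θ := by
  rw [← Set.uIcc_of_le hS.le] at hFθ hv hvar hlz ha
  have hzθ : Continuous fun s => z s θ := hz.continuous.comp (continuous_id.prodMk continuous_const)
  have hlz_cont : ContinuousOn lz (Set.uIcc 0 S) :=
    continuousOn_of_continuousOn_dotCLM <|
      hl.continuousOn_of_hasFDerivAt_comp_prodMk_right continuous_id hzθ hlz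
  have hf' : ContDiff ℝ 1 fun q : (ℝ × (Fin nz → ℝ)) × (Fin nθ → ℝ) => f q.1.1 q.1.2 q.2 :=
    hf.comp (ContinuousLinearEquiv.prodAssoc ℝ ℝ (Fin nz → ℝ) (Fin nθ → ℝ)).contDiff
  have hFθ_cont : ContinuousOn Fθ (Set.uIcc 0 S) :=
    continuousOn_of_continuousOn_mvCLM <| hf'.continuousOn_of_hasFDerivAt_comp_prodMk_right
      (x := fun s => (s, z s θ)) (continuous_id.prodMk hzθ) continuous_const hFθ
  have hv_cont : ContinuousOn v (Set.uIcc 0 S) := fun s hs =>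
    (hvar s hs).continuousAt.continuousWithinAt
  have hterminal : HasFDerivAt (fun θ' => L (z S θ')) (dotCLM (Lz ᵥ* v S)) θ :=
    hLz.comp_mvCLM (hv S Set.right_mem_uIcc)
  have hrunning : HasFDerivAt (fun θ' => ∫ τ in (0:ℝ)..S, l τ (z τ θ'))
      (dotCLM (∫ τ in (0:ℝ)..S, lz τ ᵥ* v τ)) θ := by
    rw [← intervalIntegral_dotCLM (hlz_cont.vecMul hv_cont).intervalIntegrable]
    exact hasFDerivAt_intervalIntegral_of_contDiff (hl.comp (contDiff_fst.prodMk hz)) fun τ hτ =>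
      (hlz τ hτ).comp_mvCLM (hv τ hτ)
  rw [integral_vecMul_eq_of_adjoint hFθ_cont hlz_cont hvar hv0 ha, haS, dotCLM_add]
  exact hterminal.add hrunning

/-- **Generalized adjoint method (constant parameters, integral loss).**
For the Neural ODE `ż(s,θ) = f(s, z(s,θ), θ)`, `z(0,θ) = z₀`, with Jacobian
`v(s) = ∂z/∂θ(s,θ)` solving the variational equation, and adjoint state `a` solving the
final-value problem `a'ᵀ = -aᵀ (∂f/∂z) - ∂l/∂z`, `a(S)ᵀ = ∂L/∂z(z(S,θ))`, the gradient of
`ℓ(θ) = L(z(S,θ)) + ∫₀ˢ l(τ, z(τ,θ)) dτ` is `dℓ/dθ = ∫₀ˢ a(τ)ᵀ (∂f/∂θ)(τ, z(τ,θ), θ) dτ`. -/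
theorem generalized_adjoint_method
    {nz nθ : ℕ} {S : ℝ} (hS : 0 < S)
    (f : ℝ → (Fin nz → ℝ) → (Fin nθ → ℝ) → (Fin nz → ℝ))
    (hf : ContDiff ℝ 1 (fun p : ℝ × (Fin nz → ℝ) × (Fin nθ → ℝ) => f p.1 p.2.1 p.2.2))
    (θ : Fin nθ → ℝ) (z : ℝ → (Fin nθ → ℝ) → (Fin nz → ℝ)) (z₀ : Fin nz → ℝ)
    (hz : ContDiff ℝ 1 (fun p : ℝ × (Fin nθ → ℝ) => z p.1 p.2))
    (hode : ∀ s ∈ Set.Icc (0:ℝ) S, HasDerivAt (fun u => z u θ) (f s (z s θ) θ) s)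
    (hinit : ∀ θ' : Fin nθ → ℝ, z 0 θ' = z₀)
    -- Jacobians of `f` with respect to the state and the parameters, along the solution
    (Fz : ℝ → Matrix (Fin nz) (Fin nz) ℝ) (Fθ : ℝ → Matrix (Fin nz) (Fin nθ) ℝ)
    (hFz : ∀ s ∈ Set.Icc (0:ℝ) S, HasFDerivAt (fun w => f s w θ) (mvCLM (Fz s)) (z s θ))
    (hFθ : ∀ s ∈ Set.Icc (0:ℝ) S, HasFDerivAt (fun p => f s (z s θ) p) (mvCLM (Fθ s)) θ)
    -- `v(s) = ∂z/∂θ(s,θ)` satisfies the variational equation with `v 0 = 0`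
    (v : ℝ → Matrix (Fin nz) (Fin nθ) ℝ)
    (hv : ∀ s ∈ Set.Icc (0:ℝ) S, HasFDerivAt (fun p => z s p) (mvCLM (v s)) θ)
    (hvar : ∀ s ∈ Set.Icc (0:ℝ) S, HasDerivAt v (Fz s * v s + Fθ s) s)
    (hv0 : v 0 = 0)
    -- loss functions and their gradients
    (L : (Fin nz → ℝ) → ℝ) (l : ℝ → (Fin nz → ℝ) → ℝ)
    (hL : ContDiff ℝ 1 L)
    (hl : ContDiff ℝ 1 (fun p : ℝ × (Fin nz → ℝ) => l p.1 p.2))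
    (Lz : Fin nz → ℝ) (lz : ℝ → (Fin nz → ℝ))
    (hLz : HasFDerivAt L (dotCLM Lz) (z S θ))
    (hlz : ∀ s ∈ Set.Icc (0:ℝ) S, HasFDerivAt (fun w => l s w) (dotCLM (lz s)) (z s θ))
    -- the adjoint state
    (a : ℝ → (Fin nz → ℝ))
    (ha : ∀ s ∈ Set.Icc (0:ℝ) S, HasDerivAt a (-(a s ᵥ* Fz s) - lz s) s)
    (haS : a S = Lz) :
    HasFDerivAt (fun θ' : Fin nθ → ℝ => L (z S θ') + ∫ τ in (0:ℝ)..S, l τ (z τ θ'))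
      (dotCLM (∫ τ in (0:ℝ)..S, a τ ᵥ* Fθ τ)) θ :=
  generalized_adjoint_method_general hS f hf θ z hz Fz Fθ hFθ v hv hvar hv0 L l hl Lz lz hLz hlz a
    ha haS
end

section
/- Infinite-dimensional (Gateaux) gradient for depth-varying parameters: Let S > 0 and f : [0,S] × ℝ^{n_z} × ℝ^{n_θ} → ℝ^{n_z} be continuously differentiable. Let θ : [0,S] → ℝ^{n_θ} be continuous and let η : [0,S] → ℝ^{n_θ} be a continuous perturbation direction. Suppose for ε in a neighborhood of 0 there is a solution z_ε : [0,S] → ℝ^{n_z} of ż_ε(s) = f(s, z_ε(s), θ(s) + ε η(s)) with z_ε(0) = z₀ independent of ε, such that (s,ε) ↦ z_ε(s) is continuously differentiable and v(s) := ∂z_ε(s)/∂ε |_{ε=0} satisfies the variational equation v'(s) = (∂f/∂z)(s, z₀(s), θ(s)) v(s) + (∂f/∂θ)(s, z₀(s), θ(s)) η(s), v(0) = 0. Define ℓ(ε) = L(z_ε(S)) + ∫₀ᔆ l(τ, z_ε(τ)) dτ with L, l continuously differentiable. If a : [0,S] → ℝ^{n_z} is differentiable and satisfies a'(s)ᵀ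 = −a(s)ᵀ (∂f/∂z)(s, z₀(s), θ(s)) − (∂l/∂z)(s, z₀(s)) with a(S)ᵀ = (∂L/∂z)(z₀(S)), then the directional derivative of the loss at θ in direction η is dℓ/dε |_{ε=0} = ∫₀ᔆ a(τ)ᵀ (∂f/∂θ)(τ, z₀(τ), θ(τ)) η(τ) dτ; that is, the loss sensitivity to θ(s) is the function s ↦ a(s)ᵀ (∂f/∂θ)(s, z₀(s), θ(s)). -/
/-!
By the chain rule and differentiation under the integral sign, the derivative of the loss is
`Lz ⬝ v(S) + ∫₀ˢ lz ⬝ v`. Along the adjoint state the `Fz`-terms cancel in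
`(a ⬝ v)' = a ⬝ (Fθ η) - lz ⬝ v`, so integrating from `0` (where `v = 0`) to `S` (where `a = Lz`)
turns this into `∫₀ˢ a ⬝ (Fθ η)`.
-/

open MeasureTheory Matrix

open Set Function Filter Topology Interval

theorem HasDerivAt.dotProduct {𝕜 m : Type*} [NontriviallyNormedField 𝕜] [Fintype m]
    {u w : 𝕜 → m → 𝕜} {u' w' : m → 𝕜} {x : 𝕜} (hu : HasDerivAt u u' x)
    (hw : HasDerivAt w w' x) :
    HasDerivAt (fun y => u y ⬝ᵥ w y) (u' ⬝ᵥ w x + u x ⬝ᵥ w') x := by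
  have := HasDerivAt.fun_sum (u := Finset.univ) fun i _ =>
    (hasDerivAt_pi.1 hu i).mul (hasDerivAt_pi.1 hw i)
  exact this.congr_deriv Finset.sum_add_distrib

theorem integral_dotProduct_eq_of_adjoint {m : Type*} [Fintype m] {a v b g : ℝ → m → ℝ}
    {A : ℝ → Matrix m m ℝ} {s₀ s₁ : ℝ}
    (hv : ∀ s ∈ uIcc s₀ s₁, HasDerivAt v (A s *ᵥ v s + b s) s)
    (ha : ∀ s ∈ uIcc s₀ s₁, HasDerivAt a (-(a s ᵥ* A s) - g s) s)
    (hab : IntervalIntegrable (fun s => a s ⬝ᵥ b s) volume s₀ s₁)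
    (hgv : IntervalIntegrable (fun s => g s ⬝ᵥ v s) volume s₀ s₁) :
    ∫ s in s₀..s₁, a s ⬝ᵥ b s = a s₁ ⬝ᵥ v s₁ - a s₀ ⬝ᵥ v s₀ + ∫ s in s₀..s₁, g s ⬝ᵥ v s := by
  have hderiv : ∀ s ∈ uIcc s₀ s₁,
      HasDerivAt (fun s => a s ⬝ᵥ v s) (a s ⬝ᵥ b s - g s ⬝ᵥ v s) s := by
    intro s hs
    refine ((ha s hs).dotProduct (hv s hs)).congr_deriv ?_
    rw [sub_dotProduct, neg_dotProduct, dotProduct_add, dotProduct_mulVec]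
    ring
  rw [← intervalIntegral.integral_eq_sub_of_hasDerivAt hderiv (hab.sub hgv),
    intervalIntegral.integral_sub hab hgv]
  ring

section

variable {E F Y : Type*} [NormedAddCommGroup E] [NormedSpace ℝ E]
  [NormedAddCommGroup F] [NormedSpace ℝ F] [NormedAddCommGroup Y] [NormedSpace ℝ Y]

theorem ContDiffOn.exists_continuousOn_hasDerivAt_fst {g : ℝ × Y → E} {U : Set ℝ} {K : Set Y}
    (hg : ContDiffOn ℝ 1 g (U ×ˢ K)) (hU : IsOpen U) (hK : UniqueDiffOn ℝ K) :
    ∃ g' : ℝ × Y → E, ContinuousOn g' (U ×ˢ K) ∧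
      ∀ x ∈ U, ∀ y ∈ K, HasDerivAt (fun x => g (x, y)) (g' (x, y)) x := by
  refine ⟨fun p => fderivWithin ℝ g (U ×ˢ K) p (1, 0),
    (hg.continuousOn_fderivWithin (hU.uniqueDiffOn.prod hK) le_rfl).clm_apply continuousOn_const,
    fun x hx y hy => ?_⟩
  have hline : HasDerivWithinAt (fun x : ℝ => (x, y)) ((1 : ℝ), (0 : Y)) U x :=
    ((hasDerivAt_id x).prodMk (hasDerivAt_const x y)).hasDerivWithinAt
  have hg' := ((hg.differentiableOn one_ne_zero) (x, y) (mk_mem_prod hx hy)).hasFDerivWithinAt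
  exact (hg'.comp_hasDerivWithinAt x hline fun x' hx' => mk_mem_prod hx' hy).hasDerivAt
    (hU.mem_nhds hx)

theorem intervalIntegral.hasDerivAt_integral_of_continuousOn {F F' : ℝ → ℝ → E} {U : Set ℝ}
    {x₀ a b : ℝ} (hU : IsOpen U) (hx₀ : x₀ ∈ U)
    (hF : ContinuousOn (uncurry F) (U ×ˢ uIcc a b))
    (hF' : ContinuousOn (uncurry F') (U ×ˢ uIcc a b))
    (hderiv : ∀ x ∈ U, ∀ t ∈ uIcc a b, HasDerivAt (fun x => F x t) (F' x t) x) :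
    IntervalIntegrable (F' x₀) volume a b ∧
      HasDerivAt (fun x => ∫ t in a..b, F x t) (∫ t in a..b, F' x₀ t) x₀ := by
  obtain ⟨r, hr, hrU⟩ := Metric.nhds_basis_closedBall.mem_iff.1 (hU.mem_nhds hx₀)
  obtain ⟨C, hC⟩ := ((isCompact_closedBall x₀ r).prod isCompact_uIcc).exists_bound_of_continuousOn
    (hF'.mono (prod_mono hrU subset_rfl))
  have hslice : ∀ {G : ℝ → ℝ → E}, ContinuousOn (uncurry G) (U ×ˢ uIcc a b) → ∀ x ∈ U,
      AEStronglyMeasurable (G x) (volume.restrict (Ι a b)) := fun hG x hx =>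
    ((hG.uncurry_left x hx).mono uIoc_subset_uIcc).aestronglyMeasurable measurableSet_uIoc
  refine intervalIntegral.hasDerivAt_integral_of_dominated_loc_of_deriv_le (bound := fun _ => C)
    (Metric.closedBall_mem_nhds x₀ hr) (eventually_of_mem (hU.mem_nhds hx₀) (hslice hF))
    ((hF.uncurry_left x₀ hx₀).intervalIntegrable) (hslice hF' x₀ hx₀) ?_
    intervalIntegrable_const ?_
  · exact ae_of_all _ fun t ht x hx => hC (x, t) ⟨hx, uIoc_subset_uIcc ht⟩
  · exact ae_of_all _ fun t ht x hx => hderiv x (hrU hx) t (uIoc_subset_uIcc ht)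

theorem hasDerivAt_intervalIntegral_comp {l : ℝ → E → F}
    (hl : ContDiff ℝ 1 (uncurry l)) {Z : ℝ → ℝ → E} {U : Set ℝ} {x₀ a b : ℝ} (hU : IsOpen U)
    (hx₀ : x₀ ∈ U) (hab : a < b) (hZ : ContDiffOn ℝ 1 (uncurry Z) (U ×ˢ Icc a b))
    {G : ℝ → F} (hG : ∀ t ∈ Icc a b, HasDerivAt (fun x => l t (Z x t)) (G t) x₀) :
    IntervalIntegrable G volume a b ∧
      HasDerivAt (fun x => ∫ t in a..b, l t (Z x t)) (∫ t in a..b, G t) x₀ := by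
  obtain ⟨Z', hZ'c, hZ'⟩ := hZ.exists_continuousOn_hasDerivAt_fst hU (uniqueDiffOn_Icc hab)
  have hcurve : ContinuousOn (fun p : ℝ × ℝ => (p.2, Z p.1 p.2)) (U ×ˢ Icc a b) :=
    continuous_snd.continuousOn.prodMk hZ.continuousOn
  have hderiv : ∀ x ∈ U, ∀ t ∈ Icc a b, HasDerivAt (fun x => l t (Z x t))
      (fderiv ℝ (uncurry l) (t, Z x t) (0, Z' (x, t))) x := fun x hx t ht =>
    ((hl.differentiable one_ne_zero _).hasFDerivAt.comp_hasDerivAt x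
      ((hasDerivAt_const x t).prodMk (hZ' x hx t ht)) :)
  have hG_eq : EqOn (fun t => fderiv ℝ (uncurry l) (t, Z x₀ t) (0, Z' (x₀, t))) G (Icc a b) :=
    fun t ht => (hderiv x₀ hx₀ t ht).unique (hG t ht)
  rw [← uIcc_of_le hab.le] at hcurve hZ'c hderiv hG_eq
  obtain ⟨hint, hdiff⟩ := intervalIntegral.hasDerivAt_integral_of_continuousOn hU hx₀
    (F := fun x t => l t (Z x t))
    (F' := fun x t => fderiv ℝ (uncurry l) (t, Z x t) (0, Z' (x, t)))
    (hl.continuous.comp_continuousOn hcurve)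
    (((hl.continuous_fderiv one_ne_zero).comp_continuousOn hcurve).clm_apply
      (continuousOn_const.prodMk hZ'c)) hderiv
  exact ⟨(intervalIntegrable_congr (hG_eq.mono uIoc_subset_uIcc)).1 hint,
    by rwa [intervalIntegral.integral_congr hG_eq] at hdiff⟩

theorem ContDiff.continuousOn_partialFDeriv_snd {T X : Type*} [TopologicalSpace T]
    [NormedAddCommGroup X] [NormedSpace ℝ X] {g : X × Y → F} (hg : ContDiff ℝ 1 g) {K : Set T}
    {γ : T → X} {θ : T → Y} {A : T → Y →L[ℝ] F}
    (hγ : ContinuousOn γ K) (hθ : ContinuousOn θ K)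
    (hA : ∀ s ∈ K, HasFDerivAt (fun p => g (γ s, p)) (A s) (θ s)) :
    ContinuousOn A K := by
  have hA_eq : EqOn (fun s => (fderiv ℝ g (γ s, θ s)).comp (.inr ℝ X Y)) A K := fun s hs =>
    ((hg.differentiable one_ne_zero _).hasFDerivAt.comp (θ s)
      (hasFDerivAt_prodMk_right (γ s) (θ s))).unique (hA s hs)
  exact (((hg.continuous_fderiv one_ne_zero).comp_continuousOn (hγ.prodMk hθ)).clm_comp
    continuousOn_const).congr hA_eq.symm

end

theorem infinite_dimensional_gateaux_gradient_general
    {nz nθ : ℕ} {S : ℝ} (hS : 0 < S)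
    (f : ℝ → (Fin nz → ℝ) → (Fin nθ → ℝ) → (Fin nz → ℝ))
    (hf : ContDiff ℝ 1 (fun p : ℝ × (Fin nz → ℝ) × (Fin nθ → ℝ) => f p.1 p.2.1 p.2.2))
    (θ η : ℝ → (Fin nθ → ℝ))
    (hθ : ContinuousOn θ (Set.Icc 0 S)) (hη : ContinuousOn η (Set.Icc 0 S))
    -- perturbed solutions for `ε` in a neighborhood `(-δ, δ)` of `0`
    (δ : ℝ) (hδ : 0 < δ)
    (Z : ℝ → ℝ → (Fin nz → ℝ))
    (hZ : ContDiffOn ℝ 1 (fun p : ℝ × ℝ => Z p.1 p.2) (Set.Ioo (-δ) δ ×ˢ Set.Icc 0 S))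
    -- Jacobians of `f` along the unperturbed solution
    (Fz : ℝ → Matrix (Fin nz) (Fin nz) ℝ) (Fθ : ℝ → Matrix (Fin nz) (Fin nθ) ℝ)
    (hFθ : ∀ s ∈ Set.Icc (0:ℝ) S, HasFDerivAt (fun p => f s (Z 0 s) p) (mvCLM (Fθ s)) (θ s))
    -- `v(s) = ∂Z ε(s)/∂ε |_{ε=0}` satisfies the variational equation
    (v : ℝ → (Fin nz → ℝ))
    (hv : ∀ s ∈ Set.Icc (0:ℝ) S, HasDerivAt (fun ε => Z ε s) (v s) 0)
    (hvar : ∀ s ∈ Set.Icc (0:ℝ) S, HasDerivAt v (Fz s *ᵥ v s + Fθ s *ᵥ η s) s)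
    (hv0 : v 0 = 0)
    -- loss functions and their gradients
    (L : (Fin nz → ℝ) → ℝ) (l : ℝ → (Fin nz → ℝ) → ℝ)
    (hl : ContDiff ℝ 1 (fun p : ℝ × (Fin nz → ℝ) => l p.1 p.2))
    (Lz : Fin nz → ℝ) (lz : ℝ → (Fin nz → ℝ))
    (hLz : HasFDerivAt L (dotCLM Lz) (Z 0 S))
    (hlz : ∀ s ∈ Set.Icc (0:ℝ) S, HasFDerivAt (fun w => l s w) (dotCLM (lz s)) (Z 0 s))
    -- the adjoint state
    (a : ℝ → (Fin nz → ℝ))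
    (ha : ∀ s ∈ Set.Icc (0:ℝ) S, HasDerivAt a (-(a s ᵥ* Fz s) - lz s) s)
    (haS : a S = Lz) :
    HasDerivAt (fun ε : ℝ => L (Z ε S) + ∫ τ in (0:ℝ)..S, l τ (Z ε τ))
      (∫ τ in (0:ℝ)..S, a τ ⬝ᵥ (Fθ τ *ᵥ η τ)) 0 := by
  have h0δ : (0 : ℝ) ∈ Ioo (-δ) δ := ⟨neg_lt_zero.2 hδ, hδ⟩
  have hterminal : HasDerivAt (fun ε => L (Z ε S)) (Lz ⬝ᵥ v S) 0 :=
    (hLz.comp_hasDerivAt 0 (hv S (right_mem_Icc.2 hS.le)) :)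
  obtain ⟨hlv, hrunning⟩ := hasDerivAt_intervalIntegral_comp hl isOpen_Ioo h0δ hS hZ
    (G := fun t => lz t ⬝ᵥ v t) fun t ht => ((hlz t ht).comp_hasDerivAt 0 (hv t ht) :)
  have hFθ_cont : ContinuousOn (fun s => mvCLM (Fθ s)) (Icc 0 S) :=
    ContDiff.continuousOn_partialFDeriv_snd
      (g := fun q : (ℝ × (Fin nz → ℝ)) × (Fin nθ → ℝ) => f q.1.1 q.1.2 q.2)
      (hf.comp contDiff_prodAssoc) (continuousOn_id.prodMk (hZ.continuousOn.uncurry_left 0 h0δ))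
      hθ hFθ
  have ha_cont : ContinuousOn a (Icc 0 S) := fun s hs =>
    (ha s hs).continuousAt.continuousWithinAt
  have haFθη : IntervalIntegrable (fun s => a s ⬝ᵥ (Fθ s *ᵥ η s)) volume 0 S := by
    refine ContinuousOn.intervalIntegrable ?_
    rw [uIcc_of_le hS.le]
    exact (continuous_fst.dotProduct continuous_snd).comp_continuousOn
      (ha_cont.prodMk (hFθ_cont.clm_apply hη))
  rw [← uIcc_of_le hS.le] at hvar ha
  rw [integral_dotProduct_eq_of_adjoint hvar ha haFθη hlv, hv0, haS, dotProduct_zero, sub_zero]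
  exact hterminal.add hrunning

/-- **Infinite-dimensional (Gateaux) gradient for depth-varying parameters.**
Perturbing the depth-varying parameter `θ` in a continuous direction `η`, the solution
`Z ε` of `ż = f(s, z, θ(s) + ε η(s))`, `Z ε 0 = z₀`, has sensitivity `v(s) = ∂Z ε(s)/∂ε|₀`
solving the variational equation, and the Gateaux derivative of the loss
`ℓ(ε) = L(Z ε S) + ∫₀ˢ l(τ, Z ε τ) dτ` at `ε = 0` equals
`∫₀ˢ a(τ)ᵀ (∂f/∂θ)(τ, Z 0 τ, θ(τ)) η(τ) dτ`, where `a` is the adjoint state;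
i.e. the loss sensitivity to `θ(s)` is `s ↦ a(s)ᵀ (∂f/∂θ)(s, Z 0 s, θ(s))`. -/
theorem infinite_dimensional_gateaux_gradient
    {nz nθ : ℕ} {S : ℝ} (hS : 0 < S)
    (f : ℝ → (Fin nz → ℝ) → (Fin nθ → ℝ) → (Fin nz → ℝ))
    (hf : ContDiff ℝ 1 (fun p : ℝ × (Fin nz → ℝ) × (Fin nθ → ℝ) => f p.1 p.2.1 p.2.2))
    (θ η : ℝ → (Fin nθ → ℝ))
    (hθ : ContinuousOn θ (Set.Icc 0 S)) (hη : ContinuousOn η (Set.Icc 0 S))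
    -- perturbed solutions for `ε` in a neighborhood `(-δ, δ)` of `0`
    (δ : ℝ) (hδ : 0 < δ)
    (Z : ℝ → ℝ → (Fin nz → ℝ)) (z₀ : Fin nz → ℝ)
    (hZ : ContDiffOn ℝ 1 (fun p : ℝ × ℝ => Z p.1 p.2) (Set.Ioo (-δ) δ ×ˢ Set.Icc 0 S))
    (hode : ∀ ε ∈ Set.Ioo (-δ) δ, ∀ s ∈ Set.Icc (0:ℝ) S,
      HasDerivAt (fun u => Z ε u) (f s (Z ε s) (θ s + ε • η s)) s)
    (hinit : ∀ ε ∈ Set.Ioo (-δ) δ, Z ε 0 = z₀)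
    -- Jacobians of `f` along the unperturbed solution
    (Fz : ℝ → Matrix (Fin nz) (Fin nz) ℝ) (Fθ : ℝ → Matrix (Fin nz) (Fin nθ) ℝ)
    (hFz : ∀ s ∈ Set.Icc (0:ℝ) S, HasFDerivAt (fun w => f s w (θ s)) (mvCLM (Fz s)) (Z 0 s))
    (hFθ : ∀ s ∈ Set.Icc (0:ℝ) S, HasFDerivAt (fun p => f s (Z 0 s) p) (mvCLM (Fθ s)) (θ s))
    -- `v(s) = ∂Z ε(s)/∂ε |_{ε=0}` satisfies the variational equation
    (v : ℝ → (Fin nz → ℝ))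
    (hv : ∀ s ∈ Set.Icc (0:ℝ) S, HasDerivAt (fun ε => Z ε s) (v s) 0)
    (hvar : ∀ s ∈ Set.Icc (0:ℝ) S, HasDerivAt v (Fz s *ᵥ v s + Fθ s *ᵥ η s) s)
    (hv0 : v 0 = 0)
    -- loss functions and their gradients
    (L : (Fin nz → ℝ) → ℝ) (l : ℝ → (Fin nz → ℝ) → ℝ)
    (hL : ContDiff ℝ 1 L)
    (hl : ContDiff ℝ 1 (fun p : ℝ × (Fin nz → ℝ) => l p.1 p.2))
    (Lz : Fin nz → ℝ) (lz : ℝ → (Fin nz → ℝ))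
    (hLz : HasFDerivAt L (dotCLM Lz) (Z 0 S))
    (hlz : ∀ s ∈ Set.Icc (0:ℝ) S, HasFDerivAt (fun w => l s w) (dotCLM (lz s)) (Z 0 s))
    -- the adjoint state
    (a : ℝ → (Fin nz → ℝ))
    (ha : ∀ s ∈ Set.Icc (0:ℝ) S, HasDerivAt a (-(a s ᵥ* Fz s) - lz s) s)
    (haS : a S = Lz) :
    HasDerivAt (fun ε : ℝ => L (Z ε S) + ∫ τ in (0:ℝ)..S, l τ (Z ε τ))
      (∫ τ in (0:ℝ)..S, a τ ⬝ᵥ (Fθ τ *ᵥ η τ)) 0 :=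
  infinite_dimensional_gateaux_gradient_general hS f hf θ η hθ hη δ hδ Z hZ Fz Fθ hFθ v hv hvar hv0
    L l hl Lz lz hLz hlz a ha haS
end

section
/- Data-controlled approximation of the reflection map: For all ε > 0 and all x ∈ ℝ with x ≠ 0, there exists a parameter θ > 0 (namely any θ > −ln(ε / (2|x|))) such that |φ(x) − z(1)| < ε, where φ(x) = −x is the reflection map and z : [0,1] → ℝ is the unique solution of the data-controlled linear ODE ż(s) = −θ (z(s) + x) with initial condition z(0) = x. -/
/-!
Multiplying by the integrating factor `exp (θ s)` shows `z s + x = 2 x exp (-θ s)`, so the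
reflection error at time `1` is exactly `2 |x| exp (-θ)`, which is below `ε` as soon as
`θ > -log (ε / (2 |x|))`.
-/

open Real Set

theorem add_eq_mul_exp_of_hasDerivAt_neg_mul_add {θ c a b : ℝ} {z : ℝ → ℝ} (hab : a ≤ b)
    (hz : ∀ s ∈ Icc a b, HasDerivAt z (-θ * (z s + c)) s) :
    z b + c = (z a + c) * exp (-(θ * (b - a))) := by
  set w : ℝ → ℝ := fun s => (z s + c) * exp (θ * (s - a))
  have hw : ∀ s ∈ Icc a b, HasDerivAt w 0 s := by
    intro s hs
    have hlin : HasDerivAt (fun s => θ * (s - a)) θ s := by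
      simpa using ((hasDerivAt_id s).sub_const a).const_mul θ
    have hprod : HasDerivAt w _ s := ((hz s hs).add_const c).mul hlin.exp
    convert hprod using 1
    ring
  have hwb : w b = w a :=
    constant_of_has_deriv_right_zero (fun s hs => (hw s hs).continuousAt.continuousWithinAt)
      (fun s hs => (hw s (Ico_subset_Icc_self hs)).hasDerivWithinAt) b (right_mem_Icc.2 hab)
  simp only [w, sub_self, mul_zero, exp_zero, mul_one] at hwb
  rw [← hwb, mul_assoc, ← exp_add]
  simp

theorem mul_exp_neg_lt_of_neg_log_div_lt {a ε θ : ℝ} (ha : 0 ≤ a) (hε : 0 < ε)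
    (hθ : -log (ε / a) < θ) : a * exp (-θ) < ε := by
  rcases ha.eq_or_lt with rfl | ha
  · simpa using hε
  have : exp (-θ) < ε / a := by
    simpa [exp_log (div_pos hε ha)] using exp_lt_exp.2 (neg_lt.1 hθ)
  rwa [lt_div_iff₀' ha] at this

theorem data_controlled_reflection_general (ε : ℝ) (hε : 0 < ε) (x : ℝ) :
    (∀ θ : ℝ, 0 < θ → -Real.log (ε / (2 * |x|)) < θ →
      ∀ z : ℝ → ℝ, z 0 = x →
        (∀ s ∈ Set.Icc (0:ℝ) 1, HasDerivAt z (-θ * (z s + x)) s) →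
        |(-x) - z 1| < ε) ∧
    ∃ θ : ℝ, 0 < θ ∧
      ∀ z : ℝ → ℝ, z 0 = x →
        (∀ s ∈ Set.Icc (0:ℝ) 1, HasDerivAt z (-θ * (z s + x)) s) →
        |(-x) - z 1| < ε := by
  have key : ∀ θ : ℝ, -log (ε / (2 * |x|)) < θ → ∀ z : ℝ → ℝ, z 0 = x →
      (∀ s ∈ Icc (0:ℝ) 1, HasDerivAt z (-θ * (z s + x)) s) → |(-x) - z 1| < ε := by
    intro θ hθ z hz0 hz
    have hz1 : z 1 + x = 2 * x * exp (-θ) := by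
      rw [add_eq_mul_exp_of_hasDerivAt_neg_mul_add zero_le_one hz, hz0]
      ring_nf
    have herror : |(-x) - z 1| = 2 * |x| * exp (-θ) := by
      rw [show (-x) - z 1 = -(z 1 + x) by ring, hz1, abs_neg, abs_mul, abs_mul,
        abs_two, abs_of_pos (exp_pos _)]
    rw [herror]
    exact mul_exp_neg_lt_of_neg_log_div_lt (by positivity) hε hθ
  refine ⟨fun θ _ => key θ, max 1 (-log (ε / (2 * |x|)) + 1), by positivity, key _ ?_⟩
  exact (lt_add_one _).trans_le (le_max_right _ _)

/-- **Data-controlled approximation of the reflection map.**  For every `ε > 0` and every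
nonzero input `x`, there is a parameter `θ > 0` (namely, any `θ > -log (ε / (2|x|))` works)
such that the solution of the data-controlled ODE `ż = -θ (z + x)`, `z 0 = x` on `[0,1]`
satisfies `|φ(x) - z 1| < ε` where `φ(x) = -x` is the reflection map. -/
theorem data_controlled_reflection (ε : ℝ) (hε : 0 < ε) (x : ℝ) (hx : x ≠ 0) :
    (∀ θ : ℝ, 0 < θ → -Real.log (ε / (2 * |x|)) < θ →
      ∀ z : ℝ → ℝ, z 0 = x →
        (∀ s ∈ Set.Icc (0:ℝ) 1, HasDerivAt z (-θ * (z s + x)) s) →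
        |(-x) - z 1| < ε) ∧
    ∃ θ : ℝ, 0 < θ ∧
      ∀ z : ℝ → ℝ, z 0 = x →
        (∀ s ∈ Set.Icc (0:ℝ) 1, HasDerivAt z (-θ * (z s + x)) s) →
        |(-x) - z 1| < ε :=
  data_controlled_reflection_general ε hε x
end

section
/- Exact error of the data-controlled linear model at depth one: For any x, θ ∈ ℝ, if z : [0,1] → ℝ is differentiable with z'(s) = −θ(z(s) + x) and z(0) = x, then the approximation error to the reflection map φ(x) = −x satisfies |φ(x) − z(1)| = 2 |x| e^{−θ}. -/
/-!
The shifted state `z + x` solves the homogeneous linear equation `ẏ = -θ y` with `y 0 = 2x`,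
so `z 1 + x = 2x e^{-θ}`; the error `-x - z 1` is exactly `-(z 1 + x)`.
-/

open Real Set

theorem eq_exp_mul_smul_of_hasDerivAt_smul {E : Type*} [NormedAddCommGroup E] [NormedSpace ℝ E]
    {f : ℝ → E} {k a b : ℝ} (hf : ∀ s ∈ Icc a b, HasDerivAt f (k • f s) s) :
    ∀ t ∈ Icc a b, f t = exp (k * (t - a)) • f a := by
  -- integrating factor: `exp (-k (s - a)) • f s` is constant on `[a, b]`
  set g : ℝ → E := fun s => exp (-k * (s - a)) • f s
  have hg : ∀ s ∈ Icc a b, HasDerivAt g 0 s := by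
    intro s hs
    have hexp : HasDerivAt (fun s => exp (-k * (s - a))) (exp (-k * (s - a)) * -k) s := by
      simpa using ((hasDerivAt_id s).sub_const a).const_mul (-k) |>.exp
    refine (hexp.smul (hf s hs) : HasDerivAt g _ s).congr_deriv ?_
    rw [smul_smul, mul_neg, neg_smul, mul_comm, ← smul_smul, add_neg_cancel]
  have hconst : ∀ t ∈ Icc a b, g t = g a :=
    constant_of_has_deriv_right_zero
      (fun t ht => (hg t ht).continuousAt.continuousWithinAt)
      (fun t ht => (hg t (Ico_subset_Icc_self ht)).hasDerivWithinAt)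
  intro t ht
  have hgt := hconst t ht
  simp only [g, sub_self, mul_zero, exp_zero, one_smul] at hgt
  rw [← hgt, smul_smul, ← exp_add]
  ring_nf
  rw [exp_zero, one_smul]

/-- **Exact approximation error of the data-controlled linear model at depth one.**
If `z` solves `ż = -θ (z + x)`, `z 0 = x` on `[0,1]`, then the error with respect to
the reflection map `φ(x) = -x` is exactly `|φ(x) - z 1| = 2 |x| e^{-θ}`. -/
theorem data_controlled_exact_error (x θ : ℝ) (z : ℝ → ℝ)
    (hz0 : z 0 = x)
    (hz : ∀ s ∈ Set.Icc (0:ℝ) 1, HasDerivAt z (-θ * (z s + x)) s) :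
    |(-x) - z 1| = 2 * |x| * Real.exp (-θ) := by
  have hshift : ∀ s ∈ Icc (0 : ℝ) 1, HasDerivAt (fun s => z s + x) (-θ • (z s + x)) s :=
    fun s hs => (hz s hs).add_const x
  have hz1 : z 1 + x = exp (-θ) * (2 * x) := by
    simpa [hz0, two_mul] using
      eq_exp_mul_smul_of_hasDerivAt_smul hshift 1 (right_mem_Icc.2 zero_le_one)
  rw [show -x - z 1 = -(z 1 + x) by ring, abs_neg, hz1, abs_mul, abs_mul, abs_two,
    abs_of_pos (exp_pos _)]
  ring
end
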